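/- arXiv:2503.20335 — 2 statements merged into one kernel-verified Lean document; each statement's English description precedes it below -/
import Mathlib

section
/- Let ν : ℤ → ℝ_{≥0} be a function satisfying (i) ν(k²·h) ≤ C·k^{1/2}·ν(h) for all positive integers k and all integers h, and (ii) ν(a + b) ≤ C(ν(a) + ν(b)) for all integers a, b, with ν(h) ≥ 1 for h ≠ 0. Then ν(h) = O(|h|^{1/4}) as |h| → ∞. -/
set_option maxHeartbeats 1000000


/-- Arithmetic lemma: if `ν : ℤ → ℝ≥0` satisfies `ν(k²h) ≤ C·k^{1/2}·ν(h)` for all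
positive integers `k` and integers `h`, approximate subadditivity
`ν(a+b) ≤ C(ν(a)+ν(b))`, and `ν(h) ≥ 1` for `h ≠ 0`, then `ν(h) = O(|h|^{1/4})`. -/
theorem nu_le_of_scaling_and_subadditive (ν : ℤ → ℝ) (hν0 : ∀ h : ℤ, 0 ≤ ν h)
    (C : ℝ) (hC : 0 < C)
    (hscale : ∀ (k : ℕ) (h : ℤ), 0 < k →
      ν ((k : ℤ) ^ 2 * h) ≤ C * (k : ℝ) ^ ((1 : ℝ) / 2) * ν h)
    (hsub : ∀ a b : ℤ, ν (a + b) ≤ C * (ν a + ν b))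
    (hone : ∀ h : ℤ, h ≠ 0 → 1 ≤ ν h) :
    ∃ C' : ℝ, 0 < C' ∧ ∀ h : ℤ, h ≠ 0 → ν h ≤ C' * |(h : ℝ)| ^ ((1 : ℝ) / 4) := by
  set b : ℕ := ⌈4 * C ^ 2⌉₊ + 2 with hb_def
  have hb2 : 2 ≤ b := Nat.le_add_left 2 _
  have hbpos : (0:ℝ) < (b:ℝ) := by positivity
  have hbR : (4 * C ^ 2 : ℝ) ≤ (b:ℝ) := by
    calc (4 * C ^ 2 : ℝ) ≤ (⌈4 * C ^ 2⌉₊ : ℝ) := Nat.le_ceil _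
      _ ≤ (b:ℝ) := by rw [hb_def]; push_cast; linarith
  have hsq : 2 * C ≤ (b:ℝ) ^ ((1:ℝ)/2) := by
    have h1 : ((2*C)^2 : ℝ) ^ ((1:ℝ)/2) = 2*C := by
      rw [← Real.rpow_natCast (2*C) 2, ← Real.rpow_mul (by positivity)]
      norm_num
    have h2 : ((2*C)^2 : ℝ) ^ ((1:ℝ)/2) ≤ (b:ℝ) ^ ((1:ℝ)/2) :=
      Real.rpow_le_rpow (by positivity) (by nlinarith) (by norm_num)
    linarith
  clear_value b
  clear hb_def hbR
  set B : ℕ := b ^ 2 with hB_def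
  have hB1 : 1 < B := by
    have : 2^2 ≤ b^2 := Nat.pow_le_pow_left hb2 2
    omega
  have hBZ : ((B:ℕ):ℤ) = ((b:ℕ):ℤ) ^ 2 := by rw [hB_def]; push_cast; ring
  have hBR : ((B:ℕ):ℝ) = ((b:ℕ):ℝ) ^ 2 := by rw [hB_def]; push_cast; ring
  clear_value B
  clear hB_def
  have hBne : ((Finset.Icc (-(B:ℤ)) (B:ℤ))).Nonempty :=
    ⟨0, Finset.mem_Icc.mpr ⟨neg_nonpos.mpr (by positivity), by positivity⟩⟩
  set M : ℝ := (Finset.Icc (-(B:ℤ)) (B:ℤ)).sup' hBne ν with hM_def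
  have hMbound : ∀ t : ℤ, -(B:ℤ) ≤ t → t ≤ (B:ℤ) → ν t ≤ M := fun t h1 h2 =>
    Finset.le_sup' ν (Finset.mem_Icc.mpr ⟨h1, h2⟩)
  have hM1 : 1 ≤ M := by
    have h1 : ν 1 ≤ M := hMbound 1 (by linarith [neg_nonpos.mpr (show (0:ℤ) ≤ B by positivity)])
      (by exact_mod_cast hB1.le)
    linarith [hone 1 one_ne_zero]
  set K : ℝ := M * (C + 1) with hK_def
  have hK0 : 0 < K := by nlinarith
  have key : ∀ n : ℕ, ∀ h : ℤ, |h| < ((B:ℤ))^n → ν h ≤ K * (b:ℝ) ^ ((n:ℝ)/2) := by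
    intro n
    induction n with
    | zero =>
      intro h hh
      have h0 : h = 0 := by simpa using hh
      subst h0
      have : ν 0 ≤ M := hMbound 0 (neg_nonpos.mpr (by positivity)) (by positivity)
      simp only [Nat.cast_zero, zero_div, Real.rpow_zero, mul_one]
      nlinarith
    | succ n ih =>
      intro h hh
      set N : ℤ := ((B:ℤ))^n with hN_def
      have hN : 0 < N := pow_pos (by exact_mod_cast Nat.zero_lt_of_lt hB1) n
      set t := h / N with ht_def
      set r := h % N with hr_def
      have hdecomp : N * t + r = h := Int.mul_ediv_add_emod h N
      have hr0 : 0 ≤ r := Int.emod_nonneg h hN.ne'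
      have hrN : r < N := Int.emod_lt_of_pos h hN
      have habs := abs_lt.mp hh
      have hhlt : h < N * B := by
        rw [hN_def, ← pow_succ]
        exact habs.2
      have hhgt : -(N * B) < h := by
        rw [hN_def, ← pow_succ]
        exact habs.1
      have ht_ub : t ≤ (B:ℤ) := by
        have h1 : N * t < N * (B:ℤ) := by linarith
        exact le_of_lt ((mul_lt_mul_iff_right₀ hN).mp h1)
      have ht_lb : -(B:ℤ) ≤ t := by
        have h1 : N * (-(B:ℤ) - 1) < N * t := by nlinarith
        have := (mul_lt_mul_iff_right₀ hN).mp h1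
        linarith
      have hsplit : ν h ≤ C * (ν (N * t) + ν r) := by
        rw [← hdecomp]; exact hsub _ _
      have hP : (0:ℝ) < (b:ℝ) ^ ((n:ℝ)/2) := Real.rpow_pos_of_pos hbpos _
      have hcast : ((b^n : ℕ) : ℝ) ^ ((1:ℝ)/2) = (b:ℝ) ^ ((n:ℝ)/2) := by
        rw [Nat.cast_pow, ← Real.rpow_natCast (b:ℝ) n, ← Real.rpow_mul hbpos.le,
          mul_one_div]
      have hNt : ν (N * t) ≤ C * (b:ℝ) ^ ((n:ℝ)/2) * M := by
        have hNeq : ((b^n : ℕ) : ℤ)^2 * t = N * t := by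
          rw [hN_def, hBZ]
          push_cast
          ring
        have hk := hscale (b^n) t (Nat.pow_pos (n := n) (by omega))
        rw [hNeq, hcast] at hk
        calc ν (N * t) ≤ C * (b:ℝ) ^ ((n:ℝ)/2) * ν t := hk
          _ ≤ C * (b:ℝ) ^ ((n:ℝ)/2) * M := by
            have := hMbound t ht_lb ht_ub
            have hpos : 0 ≤ C * (b:ℝ) ^ ((n:ℝ)/2) := by positivity
            exact mul_le_mul_of_nonneg_left this hpos
      have hr : ν r ≤ K * (b:ℝ) ^ ((n:ℝ)/2) := ih r (by rwa [abs_of_nonneg hr0])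
      have hstep : (b:ℝ) ^ ((((n+1:ℕ)):ℝ)/2) = (b:ℝ) ^ ((n:ℝ)/2) * (b:ℝ) ^ ((1:ℝ)/2) := by
        push_cast
        rw [show ((n:ℝ)+1)/2 = (n:ℝ)/2 + (1:ℝ)/2 by ring, Real.rpow_add hbpos]
      have hfin : C * (C * (b:ℝ) ^ ((n:ℝ)/2) * M + K * (b:ℝ) ^ ((n:ℝ)/2))
          ≤ K * ((b:ℝ) ^ ((n:ℝ)/2) * (b:ℝ) ^ ((1:ℝ)/2)) := by
        have h1 : C^2 * M + C * K ≤ K * (2*C) := by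
          rw [hK_def]; nlinarith
        have h2 : K * (2*C) ≤ K * ((b:ℝ) ^ ((1:ℝ)/2)) :=
          mul_le_mul_of_nonneg_left hsq hK0.le
        nlinarith [mul_le_mul_of_nonneg_right (h1.trans h2) hP.le]
      calc ν h ≤ C * (ν (N * t) + ν r) := hsplit
        _ ≤ C * (C * (b:ℝ) ^ ((n:ℝ)/2) * M + K * (b:ℝ) ^ ((n:ℝ)/2)) := by
            have := hν0 r
            nlinarith [hNt, hr]
        _ ≤ K * ((b:ℝ) ^ ((n:ℝ)/2) * (b:ℝ) ^ ((1:ℝ)/2)) := hfin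
        _ = K * (b:ℝ) ^ ((((n+1:ℕ)):ℝ)/2) := by rw [hstep]
  refine ⟨K * (b:ℝ) ^ ((1:ℝ)/2), by positivity, ?_⟩
  intro h hh
  set m : ℕ := h.natAbs with hm_def
  have hm0 : m ≠ 0 := Int.natAbs_ne_zero.mpr hh
  set L : ℕ := Nat.log B m with hL_def
  have h1 : m < B ^ (L + 1) := Nat.lt_pow_succ_log_self hB1 m
  have h2 : B ^ L ≤ m := Nat.pow_log_le_self B hm0
  have habs : |h| = (m:ℤ) := Int.abs_eq_natAbs h
  have habsR : |(h:ℝ)| = (m:ℝ) := by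
    rw [← Int.cast_abs, habs]; push_cast; ring
  have hkey := key (L+1) h (by rw [habs]; exact_mod_cast h1)
  have hLbound : (b:ℝ) ^ ((L:ℝ)/2) ≤ |(h:ℝ)| ^ ((1:ℝ)/4) := by
    have e1 : (b:ℝ) ^ ((L:ℝ)/2) = (((B:ℝ))^L) ^ ((1:ℝ)/4) := by
      rw [hBR, ← Real.rpow_natCast ((b:ℝ)^2) L, ← Real.rpow_natCast (b:ℝ) 2,
        ← Real.rpow_mul hbpos.le, ← Real.rpow_mul hbpos.le]
      congr 1
      ring
    have e2 : ((B:ℝ))^L ≤ |(h:ℝ)| := by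
      rw [habsR]
      exact_mod_cast h2
    rw [e1]
    exact Real.rpow_le_rpow (by positivity) e2 (by norm_num)
  calc ν h ≤ K * (b:ℝ) ^ ((((L+1:ℕ)):ℝ)/2) := hkey
    _ = K * (b:ℝ) ^ ((1:ℝ)/2) * (b:ℝ) ^ ((L:ℝ)/2) := by
        rw [show ((((L+1:ℕ)):ℝ))/2 = (1:ℝ)/2 + (L:ℝ)/2 by push_cast; ring,
          Real.rpow_add hbpos]
        ring
    _ ≤ K * (b:ℝ) ^ ((1:ℝ)/2) * |(h:ℝ)| ^ ((1:ℝ)/4) :=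
        mul_le_mul_of_nonneg_left hLbound (by positivity)
end

section
/- For n < m, every L-Lipschitz map f : S^n → S^m with L < c(m) (for a suitable constant depending on m) is non-surjective, and hence null-homotopic; moreover it admits a null-homotopy of Lipschitz constant at most C(m)·max(L,1). -/
open scoped NNReal

/-- The round unit `n`-sphere (as a metric subspace of `ℝ^{n+1}`). -/
abbrev Sph (n : ℕ) : Type := Metric.sphere (0 : EuclideanSpace ℝ (Fin (n + 1))) 1

private lemma normalize_lipschitz_aux {E : Type*} [NormedAddCommGroup E] [NormedSpace ℝ E]
    {x y : E} {r : ℝ} (hr : 0 < r) (hx : r ≤ ‖x‖) (hy : r ≤ ‖y‖) :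
    ‖‖x‖⁻¹ • x - ‖y‖⁻¹ • y‖ ≤ 2 / r * ‖x - y‖ := by
  have hx0 : (0:ℝ) < ‖x‖ := lt_of_lt_of_le hr hx
  have hy0 : (0:ℝ) < ‖y‖ := lt_of_lt_of_le hr hy
  have key : ‖x‖⁻¹ • x - ‖y‖⁻¹ • y = ‖x‖⁻¹ • (x - y) + (‖x‖⁻¹ - ‖y‖⁻¹) • y := by
    rw [smul_sub, sub_smul]; abel
  have h1 : ‖‖x‖⁻¹ • (x - y)‖ ≤ ‖x - y‖ / r := by
    rw [norm_smul, Real.norm_eq_abs, abs_inv, abs_norm, div_eq_inv_mul]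
    gcongr
  have e : ‖x‖⁻¹ - ‖y‖⁻¹ = (‖y‖ - ‖x‖) / (‖x‖ * ‖y‖) := by
    field_simp
  have h2 : ‖(‖x‖⁻¹ - ‖y‖⁻¹) • y‖ ≤ ‖x - y‖ / r := by
    rw [norm_smul, Real.norm_eq_abs, e, abs_div, abs_of_pos (by positivity : (0:ℝ) < ‖x‖ * ‖y‖)]
    have habs : |‖y‖ - ‖x‖| ≤ ‖x - y‖ := by
      calc |‖y‖ - ‖x‖| ≤ ‖y - x‖ := abs_norm_sub_norm_le y x
        _ = ‖x - y‖ := norm_sub_rev y x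
    have : |‖y‖ - ‖x‖| / (‖x‖ * ‖y‖) * ‖y‖ = |‖y‖ - ‖x‖| / ‖x‖ := by
      field_simp
    rw [this]
    calc |‖y‖ - ‖x‖| / ‖x‖ ≤ ‖x - y‖ / ‖x‖ := by gcongr
      _ ≤ ‖x - y‖ / r := by gcongr
  calc ‖‖x‖⁻¹ • x - ‖y‖⁻¹ • y‖
      = ‖‖x‖⁻¹ • (x - y) + (‖x‖⁻¹ - ‖y‖⁻¹) • y‖ := by rw [key]
    _ ≤ ‖‖x‖⁻¹ • (x - y)‖ + ‖(‖x‖⁻¹ - ‖y‖⁻¹) • y‖ := norm_add_le _ _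
    _ ≤ ‖x - y‖ / r + ‖x - y‖ / r := add_le_add h1 h2
    _ = 2 / r * ‖x - y‖ := by ring

/-- For `n < m` there are constants `c(m), C(m) > 0` such that every `L`-Lipschitz map
`f : Sⁿ → Sᵐ` with `L < c(m)` is non-surjective, hence null-homotopic; moreover it
admits a null-homotopy whose Lipschitz constant is at most `C(m)·max(L,1)`. -/
theorem small_lipschitz_maps_nullhomotopic (m : ℕ) :
    ∃ c C : ℝ, 0 < c ∧ 0 < C ∧ ∀ n : ℕ, n < m → ∀ (f : C(Sph n, Sph m)) (L : ℝ≥0),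
      LipschitzWith L f → (L : ℝ) < c →
        ¬ Function.Surjective f ∧
        f.Nullhomotopic ∧
        ∃ (y : Sph m) (H : ContinuousMap.Homotopy f (ContinuousMap.const (Sph n) y))
          (K : ℝ≥0), LipschitzWith K ⇑H ∧ (K : ℝ) ≤ C * max (L : ℝ) 1 := by
  refine ⟨1/8, 100, by norm_num, by norm_num, ?_⟩
  intro n hnm f L hf hL
  -- a base point on the source sphere
  obtain ⟨x₀, hx₀⟩ : (Metric.sphere (0 : EuclideanSpace ℝ (Fin (n + 1))) 1).Nonempty :=
    NormedSpace.sphere_nonempty.mpr zero_le_one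
  set x₀' : Sph n := ⟨x₀, hx₀⟩ with hx₀'
  set p : Sph m := f x₀' with hp
  -- norms on spheres
  have hnorm : ∀ x : Sph n, ‖(x : EuclideanSpace ℝ (Fin (n + 1)))‖ = 1 := fun x =>
    mem_sphere_zero_iff_norm.mp x.2
  have hnormm : ∀ x : Sph m, ‖(x : EuclideanSpace ℝ (Fin (m + 1)))‖ = 1 := fun x =>
    mem_sphere_zero_iff_norm.mp x.2
  -- diameter bound on the source
  have hdiam : ∀ x y : Sph n, dist x y ≤ 2 := by
    intro x y
    rw [Subtype.dist_eq, dist_eq_norm]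
    calc ‖(x : EuclideanSpace ℝ (Fin (n + 1))) - y‖ ≤ ‖(x : EuclideanSpace ℝ (Fin (n + 1)))‖ + ‖(y : EuclideanSpace ℝ (Fin (n + 1)))‖ := norm_sub_le _ _
      _ = 2 := by rw [hnorm, hnorm]; norm_num
  -- the image is 2L-close to p
  have hclose : ∀ x : Sph n, dist (f x) p ≤ 2 * L := by
    intro x
    calc dist (f x) p = dist (f x) (f x₀') := rfl
      _ ≤ L * dist x x₀' := hf.dist_le_mul x x₀'
      _ ≤ L * 2 := by gcongr; exact hdiam x x₀'
      _ = 2 * L := by ring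
  have hL4 : 2 * (L : ℝ) < 1/4 := by linarith
  -- the straight-line map
  set v : unitInterval × Sph n → EuclideanSpace ℝ (Fin (m + 1)) :=
    fun q => (1 - (q.1 : ℝ)) • ((f q.2 : EuclideanSpace ℝ (Fin (m + 1)))) +
      (q.1 : ℝ) • (p : EuclideanSpace ℝ (Fin (m + 1))) with hv
  have hvp : ∀ q, ‖v q - p‖ ≤ 2 * L := by
    intro q
    have h1 : v q - (p : EuclideanSpace ℝ (Fin (m + 1))) =
        (1 - (q.1 : ℝ)) • ((f q.2 : EuclideanSpace ℝ (Fin (m + 1))) - p) := by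
      simp only [hv, smul_sub, sub_smul, one_smul]
      abel
    rw [h1, norm_smul, Real.norm_eq_abs]
    have ht : |1 - (q.1 : ℝ)| ≤ 1 := by
      rw [abs_le]; constructor <;> [linarith [q.1.2.2]; linarith [q.1.2.1]]
    have : ‖(f q.2 : EuclideanSpace ℝ (Fin (m + 1))) - p‖ = dist (f q.2) p := by
      rw [Subtype.dist_eq, dist_eq_norm]
    calc |1 - (q.1 : ℝ)| * ‖(f q.2 : EuclideanSpace ℝ (Fin (m + 1))) - p‖
        ≤ 1 * (2 * L) := by
          apply mul_le_mul ht _ (norm_nonneg _) zero_le_one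
          rw [this]; exact hclose q.2
      _ = 2 * L := by ring
  have hvnorm : ∀ q, (3:ℝ)/4 ≤ ‖v q‖ := by
    intro q
    have h1 := hvp q
    have h2 : ‖(p : EuclideanSpace ℝ (Fin (m + 1)))‖ - ‖v q - p‖ ≤ ‖v q‖ := by
      have := norm_sub_norm_le (v q) (p : EuclideanSpace ℝ (Fin (m + 1)))
      linarith [abs_le.mp (abs_norm_sub_norm_le (v q) (p : EuclideanSpace ℝ (Fin (m + 1))))]
    rw [hnormm] at h2
    linarith
  have hvne : ∀ q, v q ≠ 0 := by
    intro q h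
    have := hvnorm q
    rw [h, norm_zero] at this
    linarith
  -- the normalized homotopy
  set Hfun : unitInterval × Sph n → Sph m :=
    fun q => ⟨‖v q‖⁻¹ • v q, by
      rw [mem_sphere_zero_iff_norm]
      exact norm_smul_inv_norm (hvne q)⟩ with hH
  -- Lipschitz bound for v
  have hvlip : ∀ a b, ‖v a - v b‖ ≤ 3 * L * dist a b := by
    intro a b
    have key : v a - v b =
        (1 - (a.1 : ℝ)) • ((f a.2 : EuclideanSpace ℝ (Fin (m + 1))) - f b.2) +
        ((a.1 : ℝ) - b.1) • ((p : EuclideanSpace ℝ (Fin (m + 1))) - f b.2) := by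
      simp only [hv, smul_sub, sub_smul, one_smul]
      abel
    have ht : |1 - (a.1 : ℝ)| ≤ 1 := by
      rw [abs_le]; constructor <;> [linarith [a.1.2.2]; linarith [a.1.2.1]]
    have hd1 : ‖(f a.2 : EuclideanSpace ℝ (Fin (m + 1))) - f b.2‖ ≤ L * dist a b := by
      have : ‖(f a.2 : EuclideanSpace ℝ (Fin (m + 1))) - f b.2‖ = dist (f a.2) (f b.2) := by
        rw [Subtype.dist_eq, dist_eq_norm]
      rw [this]
      calc dist (f a.2) (f b.2) ≤ L * dist a.2 b.2 := hf.dist_le_mul _ _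
        _ ≤ L * dist a b := by gcongr; rw [Prod.dist_eq]; exact le_max_right _ _
    have hd2 : ‖(p : EuclideanSpace ℝ (Fin (m + 1))) - f b.2‖ ≤ 2 * L := by
      have : ‖(p : EuclideanSpace ℝ (Fin (m + 1))) - f b.2‖ = dist (f b.2) p := by
        rw [Subtype.dist_eq, dist_eq_norm, norm_sub_rev]
      rw [this]; exact hclose b.2
    have hts : |(a.1 : ℝ) - b.1| ≤ dist a b := by
      have : |(a.1 : ℝ) - b.1| = dist a.1 b.1 := by
        rw [Subtype.dist_eq, Real.dist_eq]
      rw [this, Prod.dist_eq]; exact le_max_left _ _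
    calc ‖v a - v b‖
        ≤ ‖(1 - (a.1 : ℝ)) • ((f a.2 : EuclideanSpace ℝ (Fin (m + 1))) - f b.2)‖ +
          ‖((a.1 : ℝ) - b.1) • ((p : EuclideanSpace ℝ (Fin (m + 1))) - f b.2)‖ := by
          rw [key]; exact norm_add_le _ _
      _ ≤ 1 * (L * dist a b) + dist a b * (2 * L) := by
          rw [norm_smul, norm_smul, Real.norm_eq_abs, Real.norm_eq_abs]
          have g1 := mul_le_mul ht hd1 (norm_nonneg _) zero_le_one
          have g2 := mul_le_mul hts hd2 (norm_nonneg _) dist_nonneg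
          linarith
      _ = 3 * L * dist a b := by ring
  -- Lipschitz bound for Hfun
  have hHlip : LipschitzWith (8 * L) Hfun := by
    apply LipschitzWith.of_dist_le_mul
    intro a b
    have : dist (Hfun a) (Hfun b) = ‖‖v a‖⁻¹ • v a - ‖v b‖⁻¹ • v b‖ := by
      rw [Subtype.dist_eq, dist_eq_norm]
    rw [this]
    calc ‖‖v a‖⁻¹ • v a - ‖v b‖⁻¹ • v b‖
        ≤ 2 / (3/4) * ‖v a - v b‖ :=
          normalize_lipschitz_aux (by norm_num) (hvnorm a) (hvnorm b)
      _ ≤ 2 / (3/4) * (3 * L * dist a b) := by gcongr; exact hvlip a b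
      _ = 8 * L * dist a b := by ring
      _ = ((8 * L : ℝ≥0) : ℝ) * dist a b := by push_cast; ring
  -- non-surjectivity : the antipode of p is missed
  have hmiss : ¬ Function.Surjective f := by
    intro hs
    set q : Sph m := ⟨-(p : EuclideanSpace ℝ (Fin (m + 1))), by
      rw [mem_sphere_zero_iff_norm, norm_neg]; exact hnormm p⟩ with hq
    obtain ⟨x, hx⟩ := hs q
    have hdpq : dist p q = 2 := by
      rw [Subtype.dist_eq, dist_eq_norm, hq, sub_neg_eq_add]
      have : (p : EuclideanSpace ℝ (Fin (m + 1))) + p = (2:ℝ) • p := (two_smul ℝ _).symm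
      rw [this, norm_smul, Real.norm_eq_abs, hnormm]
      norm_num
    have h2 : dist p (f x) ≤ 2 * L := by rw [dist_comm]; exact hclose x
    rw [hx, hdpq] at h2
    linarith
  -- the homotopy
  have hmap0 : ∀ x : Sph n, Hfun (0, x) = f x := by
    intro x
    apply Subtype.ext
    simp only [hH]
    have : v (0, x) = (f x : EuclideanSpace ℝ (Fin (m + 1))) := by
      simp [hv]
    rw [this, hnormm (f x)]
    simp
  have hmap1 : ∀ x : Sph n, Hfun (1, x) = p := by
    intro x
    apply Subtype.ext
    simp only [hH]
    have : v (1, x) = (p : EuclideanSpace ℝ (Fin (m + 1))) := by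
      simp [hv]
    rw [this, hnormm p]
    simp
  set H : ContinuousMap.Homotopy f (ContinuousMap.const (Sph n) p) :=
    { toFun := Hfun
      continuous_toFun := hHlip.continuous
      map_zero_left := hmap0
      map_one_left := hmap1 } with hHdef
  refine ⟨hmiss, ⟨p, ⟨H⟩⟩, p, H, 8 * L, hHlip, ?_⟩
  push_cast
  nlinarith [le_max_left (L : ℝ) 1, le_max_right (L : ℝ) 1, L.coe_nonneg]
end
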